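/- arXiv:2506.02598 — 7 statements merged into one kernel-verified Lean document; each statement's English description precedes it below -/
import Mathlib

section
/- Let C be a small abelian category equipped with the epimorphism topology J. Then J is subcanonical for abelian-group-valued presheaves: for every object c of C, the representable presheaf Hom_C(-, c) : C^op → Ab is a J-sheaf. -/
open CategoryTheory CategoryTheory.Limits Opposite

universe u

/-- Let `C` be a small abelian category with the epimorphism topology `J`.
Then `J` is subcanonical for abelian-group-valued presheaves: for every object `c` of `C`
the representable presheaf `Hom_C(-, c) : Cᵒᵖ ⥤ Ab` is a `J`-sheaf. -/
theorem representable_isSheaf_epi_topology (C : Type u) [SmallCategory C] [Abelian C]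
    (J : GrothendieckTopology C)
    (hJ : ∀ (x : C) (S : Sieve x),
      S ∈ J x ↔ ∃ (y : C) (p : y ⟶ x), Epi p ∧ S.arrows p)
    (c : C) :
    Presheaf.IsSheaf J (preadditiveYoneda.obj c) := by
  -- In an abelian category, every epimorphism is effective.
  have effEpi : ∀ {y x : C} (p : y ⟶ x), Epi p → EffectiveEpi p := by
    intro y x p hp
    haveI := hp
    haveI : IsRegularEpi p := by haveI : NormalEpi p := normalEpiOfEpi p; exact isRegularEpi_of_regularEpi (NormalEpi.regularEpi p)
    infer_instance
  -- Abelian categories are preregular.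
  haveI : Preregular C := by
    constructor
    intro X Y Z f g hg
    haveI : Epi g := inferInstance
    refine ⟨pullback f g, pullback.fst f g, ?_, pullback.snd f g, pullback.condition.symm⟩
    exact effEpi _ inferInstance
  -- `J` coincides with the regular topology.
  have hJeq : J = regularTopology C := by
    ext x S
    rw [hJ x S, regularTopology.mem_sieves_iff_hasEffectiveEpi]
    constructor
    · rintro ⟨y, p, hp, hS⟩
      exact ⟨y, p, effEpi p hp, hS⟩
    · rintro ⟨y, p, hp, hS⟩
      haveI := hp
      exact ⟨y, p, inferInstance, hS⟩
  subst hJeq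
  rw [Presheaf.isSheaf_iff_isSheaf_forget _ _ (forget AddCommGrpCat),
    isSheaf_iff_isSheaf_of_type _ _]
  have : preadditiveYoneda.obj c ⋙ forget AddCommGrpCat = yoneda.obj c := by
    have h := congrArg (fun (F : C ⥤ Cᵒᵖ ⥤ Type u) => F.obj c)
      (whiskering_preadditiveYoneda (C := C))
    exact h
  rw [this]
  exact regularTopology.isSheaf_yoneda_obj c
end

section
/- Let C be a small abelian category with the epimorphism topology J, and let y : C → Sh(C, J; Ab) denote the Yoneda functor into the abelian category of J-sheaves of abelian groups. Then y is exact: for every short exact sequence 0 → x → w → z → 0 in C, the induced sequence 0 → y(x) → y(w) → y(z) → 0 is a short exact sequence in the abelian category of J-sheaves; in particular, for every epimorphism p in C, y(p) is an epimorphism of sheaves. -/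
open CategoryTheory CategoryTheory.Limits Opposite

universe u

/-- Let `C` be a small abelian category with the epimorphism topology `J`
and let `y : C ⥤ Sh(C, J; Ab)` be the Yoneda functor into `J`-sheaves of abelian groups
(an additive functor whose composition with the forgetful functor to presheaves is the
preadditive Yoneda embedding).  Then `y` is exact: every short exact sequence
`0 → x → w → z → 0` of `C` is sent to a short exact sequence of sheaves; in particular,
for every epimorphism `p` of `C`, `y.map p` is an epimorphism of sheaves. -/
theorem yoneda_to_sheaves_exact (C : Type u) [SmallCategory C] [Abelian C]
    (J : GrothendieckTopology C)
    (hJ : ∀ (x : C) (S : Sieve x),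
      S ∈ J x ↔ ∃ (y : C) (p : y ⟶ x), Epi p ∧ S.arrows p)
    (y : C ⥤ Sheaf J AddCommGrpCat.{u}) [y.Additive]
    (e : y ⋙ sheafToPresheaf J AddCommGrpCat ≅ preadditiveYoneda) :
    (∀ S : ShortComplex C, S.ShortExact → (S.map y).ShortExact) ∧
    (∀ {a b : C} (p : a ⟶ b), Epi p → Epi (y.map p)) := by
  -- y preserves limits
  haveI : PreservesLimits (preadditiveYoneda : C ⥤ _) :=
    preservesLimits_of_evaluation _ (fun k =>
      preservesLimits_of_natIso
        (show preadditiveCoyoneda.obj k ≅ preadditiveYoneda ⋙ (evaluation _ _).obj k from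
          NatIso.ofComponents (fun X => Iso.refl _) (by intros; rfl)))
  haveI : PreservesLimits (y ⋙ sheafToPresheaf J AddCommGrpCat) := preservesLimits_of_natIso e.symm
  haveI : PreservesLimits y :=
    preservesLimits_of_reflects_of_preserves y (sheafToPresheaf J AddCommGrpCat)
  haveI : PreservesFiniteLimits y := PreservesLimitsOfSize.preservesFiniteLimits y
  -- the epi part
  have epiMap : ∀ {a b : C} (p : a ⟶ b), Epi p → Epi (y.map p) := by
    intro a b p hp
    haveI := hp
    refine ⟨fun {T} α β hαβ => ?_⟩
    apply Sheaf.hom_ext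
    haveI : IsIso (e.inv.app b) := inferInstance
    rw [← cancel_epi (e.inv.app b)]
    have key : ∀ (d : Cᵒᵖ) (q : unop d ⟶ a),
        α.hom.app d ((e.inv.app b).app d (q ≫ p)) =
        β.hom.app d ((e.inv.app b).app d (q ≫ p)) := by
      intro d q
      have h1 : (e.inv.app b).app d (q ≫ p)
          = (y.map p).hom.app d ((e.inv.app a).app d q) := by
        have hnat := e.inv.naturality p
        have h2 := ConcreteCategory.congr_hom (NatTrans.congr_app hnat d) q
        simp only [NatTrans.comp_app, comp_apply] at h2
        exact h2
      rw [h1]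
      have hA := ConcreteCategory.congr_hom (NatTrans.congr_app (congrArg InducedCategory.Hom.hom hαβ) d)
        ((e.inv.app a).app d q)
      simpa [comp_apply] using hA
    ext d (f : unop d ⟶ b)
    simp only [NatTrans.comp_app, comp_apply]
    have hcover : Sieve.generate (Presieve.singleton (pullback.snd p f)) ∈ J (unop d) :=
      (hJ _ _).2 ⟨pullback p f, pullback.snd p f, inferInstance,
        ⟨pullback p f, 𝟙 _, pullback.snd p f, Presieve.singleton.mk, by simp⟩⟩
    have hT : Presieve.IsSheaf J (T.val ⋙ forget AddCommGrpCat) :=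
      (isSheaf_iff_isSheaf_of_type J _).1
        ((Presheaf.isSheaf_iff_isSheaf_forget J T.val (forget AddCommGrpCat)).1 T.cond)
    apply (Presieve.IsSheaf.isSeparated hT _ hcover).ext
    rintro Y g ⟨Z, h, g', hg', rfl⟩
    cases hg'
    show T.val.map _ (α.hom.app d ((e.inv.app b).app d f))
      = T.val.map _ (β.hom.app d ((e.inv.app b).app d f))
    have hnA := ConcreteCategory.congr_hom (α.hom.naturality (h ≫ pullback.snd p f).op)
      ((e.inv.app b).app d f)
    have hnB := ConcreteCategory.congr_hom (β.hom.naturality (h ≫ pullback.snd p f).op)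
      ((e.inv.app b).app d f)
    have hne := ConcreteCategory.congr_hom ((e.inv.app b).naturality (h ≫ pullback.snd p f).op) f
    have hmid : (α.hom.app (op Y))
          (((y.obj b).val.map (h ≫ pullback.snd p f).op) (((e.inv.app b).app d) f))
        = (β.hom.app (op Y))
          (((y.obj b).val.map (h ≫ pullback.snd p f).op) (((e.inv.app b).app d) f)) := by
      have hstep : (preadditiveYoneda.obj b).map (h ≫ pullback.snd p f).op f
          = (h ≫ pullback.fst p f) ≫ p := by
        show ((h ≫ pullback.snd p f) ≫ f) = (h ≫ pullback.fst p f) ≫ p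
        simp [pullback.condition]
      have hx : ((y.obj b).val.map (h ≫ pullback.snd p f).op) (((e.inv.app b).app d) f)
          = ((e.inv.app b).app (op Y)) ((h ≫ pullback.fst p f) ≫ p) :=
        hne.symm.trans (congrArg ((e.inv.app b).app (op Y)) hstep)
      rw [hx]
      exact key (op Y) (h ≫ pullback.fst p f)
    exact hnA.symm.trans (hmid.trans hnB)
  refine ⟨?_, epiMap⟩
  intro S hS
  haveI := hS.mono_f
  haveI := hS.epi_g
  have hker := KernelFork.mapIsLimit _ hS.fIsKernel y
  exact ShortComplex.ShortExact.mk'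
    (ShortComplex.exact_of_f_is_kernel _ hker)
    (mono_of_isLimit_fork hker)
    (epiMap S.g hS.epi_g)
end

section
/- Let C be a small abelian category with the epimorphism topology J, and let y : C → Sh(C, J; Ab) denote the Yoneda functor into J-sheaves of abelian groups. Then y reflects exactness: if x → w → z is a composable pair of morphisms in C such that 0 → y(x) → y(w) → y(z) → 0 is a short exact sequence in the abelian category of J-sheaves, then 0 → x → w → z → 0 is a short exact sequence in C. -/
open CategoryTheory CategoryTheory.Limits Opposite

universe u

/-- Let `C` be a small abelian category with the epimorphism topology `J`
and let `y : C ⥤ Sh(C, J; Ab)` be the Yoneda functor into `J`-sheaves of abelian groups.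
Then `y` reflects exactness: if `x → w → z` is a composable pair of morphisms of `C` such
that `0 → y x → y w → y z → 0` is a short exact sequence of sheaves, then
`0 → x → w → z → 0` is a short exact sequence in `C`. -/
theorem yoneda_to_sheaves_reflects_exactness (C : Type u) [SmallCategory C] [Abelian C]
    (J : GrothendieckTopology C)
    (hJ : ∀ (x : C) (S : Sieve x),
      S ∈ J x ↔ ∃ (y : C) (p : y ⟶ x), Epi p ∧ S.arrows p)
    (y : C ⥤ Sheaf J AddCommGrpCat.{u}) [y.Additive]
    (e : y ⋙ sheafToPresheaf J AddCommGrpCat ≅ preadditiveYoneda)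
    (x w z : C) (f : x ⟶ w) (g : w ⟶ z)
    (h0 : y.map f ≫ y.map g = 0)
    (hses : (ShortComplex.mk (y.map f) (y.map g) h0).ShortExact) :
    ∃ hfg : f ≫ g = 0, (ShortComplex.mk f g hfg).ShortExact := by
  -- `y` is fully faithful
  have hcf : (y ⋙ sheafToPresheaf J AddCommGrpCat).Faithful := Functor.Faithful.of_iso e.symm
  have hcfu : (y ⋙ sheafToPresheaf J AddCommGrpCat).Full := Functor.Full.of_iso e.symm
  have hfaith : y.Faithful := Functor.Faithful.of_comp y (sheafToPresheaf J AddCommGrpCat)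
  have hfull : y.Full := Functor.Full.of_comp_faithful y (sheafToPresheaf J AddCommGrpCat)
  have hfg : f ≫ g = 0 := y.map_injective (by rw [y.map_comp, h0, y.map_zero])
  refine ⟨hfg, ?_⟩
  have hmono : Mono f := by
    have := hses.mono_f
    exact y.mono_of_mono_map (f := f) (by assumption)
  -- `g` is epi, via local surjectivity
  have hepiS : Epi (y.map g) := hses.epi_g
  have hls : Sheaf.IsLocallySurjective (y.map g) := by
    rw [Sheaf.isLocallySurjective_iff_epi']; exact hepiS
  -- take the section of `y z` over `z` corresponding to the identity
  let s : ((y.obj z).val.obj (op z)) := (e.inv.app z).app (op z) (𝟙 z)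
  have hmem : Presheaf.imageSieve (y.map g).hom s ∈ J z :=
    Presheaf.imageSieve_mem J (y.map g).hom s
  obtain ⟨v, p, hp, t, ht⟩ := (hJ z _).1 hmem
  have hepi : Epi g := by
    -- transfer `t` to a morphism `u : v ⟶ w`
    let u : v ⟶ w := (e.hom.app w).app (op v) t
    have h1 : u ≫ g = p := by
      have hnat : (y.map g).hom ≫ e.hom.app z
          = (e.hom.app w) ≫ preadditiveYoneda.map g := by
        simpa using e.hom.naturality g
      have h2 := congrArg (fun (φ : (y.obj w).val ⟶ preadditiveYoneda.obj z) =>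
        φ.app (op v) t) hnat
      simp only [NatTrans.comp_app, AddCommGrpCat.coe_comp, Function.comp_apply] at h2
      have h3 : (preadditiveYoneda.map g).app (op v) u = u ≫ g := rfl
      rw [← h3]
      dsimp only [u]
      refine h2.symm.trans ?_
      rw [ht]
      -- now : (e.hom.app z).app (op v) ((y.obj z).val.map p.op s) = p
      have h4 : (y.obj z).val.map p.op ≫ (e.hom.app z).app (op v)
          = (e.hom.app z).app (op z) ≫ (preadditiveYoneda.obj z).map p.op :=
        (e.hom.app z).naturality p.op
      have h5 := congrArg (fun (φ : (y.obj z).val.obj (op z) ⟶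
          (preadditiveYoneda.obj z).obj (op v)) => φ s) h4
      simp only [AddCommGrpCat.coe_comp, Function.comp_apply] at h5
      rw [h5]
      have h6 : (e.hom.app z).app (op z) s = 𝟙 z := by
        dsimp only [s]
        refine (congrArg (fun (φ : preadditiveYoneda.obj z ⟶ preadditiveYoneda.obj z) => ConcreteCategory.hom (NatTrans.app φ (op z)) (𝟙 z)) (e.inv_hom_id_app z)).trans ?_
        rfl
      show (preadditiveYoneda.obj z).map p.op (((e.hom.app z).app (op z)) s) = p
      rw [h6]
      exact Category.comp_id p
    rw [← h1] at hp
    exact epi_of_epi u g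
  -- exactness at `w`: the kernel of `g` factors through `f`
  have hker : kernel.ι g ≫ g = 0 := kernel.condition g
  have hk0 : y.map (kernel.ι g) ≫ y.map g = 0 := by
    rw [← y.map_comp, hker, y.map_zero]
  let K := hses.fIsKernel
  let ψ : y.obj (kernel g) ⟶ y.obj x :=
    K.lift (KernelFork.ofι (y.map (kernel.ι g)) hk0)
  have hψ : ψ ≫ y.map f = y.map (kernel.ι g) :=
    K.fac (KernelFork.ofι (y.map (kernel.ι g)) hk0) WalkingParallelPair.zero
  obtain ⟨u, hu⟩ := y.map_surjective ψ
  have hufact : u ≫ f = kernel.ι g := by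
    apply y.map_injective
    rw [y.map_comp, hu, hψ]
  have hexact : (ShortComplex.mk f g hfg).Exact := by
    rw [ShortComplex.exact_iff_kernel_ι_comp_cokernel_π_zero]
    dsimp
    rw [← hufact, Category.assoc, cokernel.condition, comp_zero]
  exact ShortComplex.ShortExact.mk' hexact hmono hepi
end

section
/- Let C be a small abelian category with the epimorphism topology J. A presheaf of abelian groups X : C^op → Ab has vanishing sheafification with respect to J if and only if X is weakly effaceable, i.e. for every object c of C and every element ξ ∈ X(c) there exists an epimorphism p : c' → c in C with X(p)(ξ) = 0. -/
open CategoryTheory CategoryTheory.Limits Opposite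

universe u

set_option maxHeartbeats 1000000

/-- Let `C` be a small abelian category with the epimorphism topology `J`.
A presheaf of abelian groups `X : Cᵒᵖ ⥤ Ab` has vanishing sheafification with respect to
`J` if and only if `X` is weakly effaceable, i.e. for every `c : C` and every `ξ ∈ X c`
there is an epimorphism `p : c' ⟶ c` in `C` with `X.map p.op ξ = 0`. -/
theorem sheafification_isZero_iff_weakly_effaceable
    (C : Type u) [SmallCategory C] [Abelian C]
    (J : GrothendieckTopology C)
    (hJ : ∀ (x : C) (S : Sieve x),
      S ∈ J x ↔ ∃ (y : C) (p : y ⟶ x), Epi p ∧ S.arrows p)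
    (X : Cᵒᵖ ⥤ AddCommGrpCat.{u}) :
    IsZero ((presheafToSheaf J AddCommGrpCat.{u}).obj X) ↔
      ∀ (c : C) (ξ : X.obj (op c)),
        ∃ (c' : C) (p : c' ⟶ c), Epi p ∧ X.map p.op ξ = 0 := by
  constructor
  · intro h c ξ
    have hzero : (𝟙 ((presheafToSheaf J AddCommGrpCat.{u}).obj X)) = (0 : _) := h.eq_of_src _ _
    have h0 : (toSheafify J X).app (op c) ξ = (toSheafify J X).app (op c) 0 := by
      have h1 : (toSheafify J X).app (op c) ξ = 0 := by
        have := congrArg (fun (f : (presheafToSheaf J AddCommGrpCat.{u}).obj X ⟶ _) =>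
          f.hom.app (op c) ((toSheafify J X).app (op c) ξ)) hzero
        simpa using this
      rw [h1, map_zero]
    have hmem := Presheaf.equalizerSieve_mem J (toSheafify J X) ξ 0 h0
    rw [hJ] at hmem
    obtain ⟨c', p, hp, hps⟩ := hmem
    refine ⟨c', p, hp, ?_⟩
    have h2 : X.map p.op ξ = X.map p.op 0 := hps
    rw [map_zero] at h2
    exact h2
  · intro h
    rw [IsZero.iff_id_eq_zero]
    apply Sheaf.hom_ext
    have hsep : Presheaf.IsSeparated J (sheafify J X) :=
      ((presheafToSheaf J AddCommGrpCat.{u}).obj X).isSeparated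
    have hts : toSheafify J X = 0 := by
      apply NatTrans.ext
      funext c
      apply ConcreteCategory.hom_ext
      intro ξ
      obtain ⟨c', p, hp, hpz⟩ := h c.unop ξ
      have hmem : Presheaf.equalizerSieve (F := X) (X := c) ξ 0 ∈ J c.unop := by
        rw [hJ]
        refine ⟨c', p, hp, ?_⟩
        have : X.map p.op ξ = X.map p.op 0 := by rw [map_zero]; exact hpz
        exact this
      have key : (toSheafify J X).app c ξ = 0 := by
        refine hsep c.unop _ hmem _ 0 ?_
        intro Y f hf
        have h1 : (sheafify J X).map f.op ((toSheafify J X).app c ξ)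
            = (toSheafify J X).app (op Y) (X.map f.op ξ) :=
          (NatTrans.naturality_apply (toSheafify J X) f.op ξ).symm
        have h2 : X.map f.op ξ = 0 := by
          have : X.map f.op ξ = X.map f.op 0 := hf
          rw [map_zero] at this; exact this
        have h3 : (sheafify J X).map f.op (0 : (sheafify J X).obj c) = 0 := map_zero _
        rw [h1, h2, map_zero, h3]
      have hz : ((0 : X ⟶ sheafify J X).app c) ξ = 0 := rfl
      rw [key, hz]
    show 𝟙 (sheafify J X) = 0
    apply sheafify_hom_ext J _ _ ((presheafToSheaf J AddCommGrpCat.{u}).obj X).cond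
    rw [Category.comp_id, Limits.comp_zero, hts]
end

section
/- Let C be a small abelian category and let p : w → z be an epimorphism in C. Then the elementary acyclic presheaf associated to p, namely the cokernel in presheaves of abelian groups of the induced map Hom_C(-, w) → Hom_C(-, z), is weakly effaceable: for every object c and every element ξ of this cokernel at c, there exists an epimorphism q : c' → c in C killing ξ. -/
open CategoryTheory CategoryTheory.Limits Opposite

universe u

/-- Let `C` be a small abelian category and `p : w ⟶ z` an epimorphism
in `C`.  Then the associated elementary acyclic presheaf, namely the cokernel (in
presheaves of abelian groups) of the induced map `Hom_C(-, w) ⟶ Hom_C(-, z)`, is weakly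
effaceable: every section of it over `c` is killed by restriction along some epimorphism
`q : c' ⟶ c`. -/
theorem elementary_acyclic_weakly_effaceable
    (C : Type u) [SmallCategory C] [Abelian C]
    (w z : C) (p : w ⟶ z) (hp : Epi p)
    (c : C) (ξ : (cokernel (preadditiveYoneda.map p)).obj (op c)) :
    ∃ (c' : C) (q : c' ⟶ c), Epi q ∧
      (cokernel (preadditiveYoneda.map p)).map q.op ξ = 0 := by
  have hepi : Epi ((cokernel.π (preadditiveYoneda.map p)).app (op c)) := inferInstance
  obtain ⟨f, hf⟩ := (AddCommGrpCat.epi_iff_surjective _).mp hepi ξ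
  refine ⟨pullback p f, pullback.snd p f, Abelian.epi_pullback_of_epi_f p f, ?_⟩
  rw [← hf]
  have hnat := ConcreteCategory.congr_hom
    ((cokernel.π (preadditiveYoneda.map p)).naturality (pullback.snd p f).op) f
  simp only [Functor.comp_map, comp_apply] at hnat
  rw [← hnat]
  have : (preadditiveYoneda.obj z).map (pullback.snd p f).op f
      = (preadditiveYoneda.map p).app (op (pullback p f)) (pullback.fst p f) := by
    show pullback.snd p f ≫ f = pullback.fst p f ≫ p
    exact pullback.condition.symm
  rw [this]
  have h2 := ConcreteCategory.congr_hom (congrArg (fun t => NatTrans.app t (op (pullback p f))) (cokernel.condition (preadditiveYoneda.map p))) (pullback.fst p f)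
  simp only [NatTrans.comp_app, ConcreteCategory.comp_apply] at h2
  exact h2.trans (by simp; rfl)
end

section
/- Let C be an abelian category and let U be a full additive subcategory of C closed under extensions. Then U is left special if and only if every monomorphism i : a → b in C whose cokernel lies in U is a pushout of an admissible monomorphism of U; that is, if and only if for every such i there exist a monomorphism i' : u → v with u, v and coker(i') in U, a morphism u → a, and a pushout square exhibiting i as the pushout of i' along u → a. -/
open CategoryTheory CategoryTheory.Limits Opposite ZeroObject

universe v u

section Aux

variable {C : Type u} [Category.{v} C] [Abelian C] (U : Set C)

/-- A set of objects containing `0` and closed under extensions is closed under isomorphism. -/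
lemma memU_of_iso (hzero : (0 : C) ∈ U)
    (hext : ∀ S : ShortComplex C, S.ShortExact → S.X₁ ∈ U → S.X₃ ∈ U → S.X₂ ∈ U)
    {a b : C} (e : a ≅ b) (ha : a ∈ U) : b ∈ U := by
  let S : ShortComplex C := ShortComplex.mk e.hom (0 : b ⟶ (0 : C)) comp_zero
  have hex : S.Exact := by
    rw [S.exact_iff_epi rfl]
    exact inferInstanceAs (Epi e.hom)
  haveI : Mono S.f := inferInstanceAs (Mono e.hom)
  haveI : Epi S.g := ⟨fun g h _ => (isZero_zero C).eq_of_src g h⟩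
  exact hext S { exact := hex } ha hzero

end Aux

/-- Let `C` be an abelian category and `U` a full additive subcategory of
`C` closed under extensions (encoded as a class of objects containing `0`, closed under
binary biproducts and under extensions).  Then `U` is left special (for every epimorphism
`p : x ⟶ u` with `u ∈ U` there is `f : v ⟶ x` with `v ∈ U` such that `f ≫ p` is an
epimorphism whose kernel lies in `U`) if and only if every monomorphism `i : a ⟶ b` in `C`
whose cokernel lies in `U` is a pushout of an admissible monomorphism of `U`, i.e. there
exist a monomorphism `i' : u ⟶ v` with `u`, `v` and `coker i'` in `U`, a morphism
`t : u ⟶ a`, and a pushout square exhibiting `i` as the pushout of `i'` along `t`. -/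
theorem left_special_iff_monos_are_pushouts
    (C : Type u) [Category.{v} C] [Abelian C] (U : Set C)
    (hzero : (0 : C) ∈ U)
    (hbiprod : ∀ a b : C, a ∈ U → b ∈ U → (a ⊞ b) ∈ U)
    (hext : ∀ S : ShortComplex C, S.ShortExact → S.X₁ ∈ U → S.X₃ ∈ U → S.X₂ ∈ U) :
    (∀ (x u : C) (p : x ⟶ u), Epi p → u ∈ U →
        ∃ (v : C) (f : v ⟶ x), v ∈ U ∧ Epi (f ≫ p) ∧ kernel (f ≫ p) ∈ U) ↔
    (∀ (a b : C) (i : a ⟶ b), Mono i → cokernel i ∈ U →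
        ∃ (u v : C) (i' : u ⟶ v) (t : u ⟶ a) (s : v ⟶ b),
          u ∈ U ∧ v ∈ U ∧ Mono i' ∧ cokernel i' ∈ U ∧ IsPushout i' t s i) := by
  constructor
  · -- left special → pushout description of monos with cokernel in `U`
    intro hls a b i hi hcok
    haveI := hi
    obtain ⟨v, f, hv, hepi, hker⟩ :=
      hls b (cokernel i) (cokernel.π i) inferInstance hcok
    set g : v ⟶ cokernel i := f ≫ cokernel.π i with hg
    haveI hgepi : Epi g := hepi
    set u : C := kernel g with hu
    set ι : u ⟶ v := kernel.ι g with hιdef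
    have hιf : (ι ≫ f) ≫ cokernel.π i = 0 := by
      rw [Category.assoc, ← hg, kernel.condition]
    set t : u ⟶ a := Abelian.monoLift i (ι ≫ f) hιf with htdef
    have ht : t ≫ i = ι ≫ f := Abelian.monoLift_comp i (ι ≫ f) hιf
    -- the short complex `u ⟶ v ⊞ a ⟶ b`
    set lam : u ⟶ v ⊞ a := biprod.lift ι (-t) with hlam
    set e : v ⊞ a ⟶ b := biprod.desc f i with he
    have hle : lam ≫ e = 0 := by
      rw [hlam, he, biprod.lift_desc, Preadditive.neg_comp, ht, add_neg_cancel]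
    haveI hmlam : Mono lam := mono_of_mono_fac (biprod.lift_fst ι (-t))
    haveI hee : Epi e := by
      rw [Preadditive.epi_iff_cancel_zero]
      intro W q hq
      have h1 : f ≫ q = 0 := by
        have := whisker_eq biprod.inl hq
        simpa [he] using this
      have h2 : i ≫ q = 0 := by
        have := whisker_eq biprod.inr hq
        simpa [he] using this
      have hq' : q = cokernel.π i ≫ cokernel.desc i q h2 :=
        (cokernel.π_desc i q h2).symm
      have hgq : g ≫ cokernel.desc i q h2 = 0 := by
        rw [hg, Category.assoc, ← hq', h1]
      have : cokernel.desc i q h2 = 0 := by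
        rw [← cancel_epi g, hgq, comp_zero]
      rw [hq', this, comp_zero]
    -- `lam` is a kernel of `e`
    have hlim : IsLimit (KernelFork.ofι lam hle) := by
      refine KernelFork.IsLimit.ofι lam hle
        (fun {W} k hk => kernel.lift g (k ≫ biprod.fst) ?_) (fun {W} k hk => ?_)
        (fun {W} k hk m hm => ?_)
      · -- the lift exists
        have hk' : (k ≫ biprod.fst) ≫ f + (k ≫ biprod.snd) ≫ i = 0 := by
          have := hk
          rw [he, biprod.desc_eq] at this
          simpa [Preadditive.comp_add] using this
        have : (k ≫ biprod.fst) ≫ f = -((k ≫ biprod.snd) ≫ i) := by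
          rw [eq_neg_iff_add_eq_zero]; exact hk'
        rw [hg, ← Category.assoc, this, Preadditive.neg_comp, Category.assoc,
          cokernel.condition, comp_zero, neg_zero]
      · -- factorisation
        apply biprod.hom_ext
        · rw [Category.assoc, hlam, biprod.lift_fst, hιdef, kernel.lift_ι]
        · have hk' : (k ≫ biprod.fst) ≫ f + (k ≫ biprod.snd) ≫ i = 0 := by
            have := hk
            rw [he, biprod.desc_eq] at this
            simpa [Preadditive.comp_add] using this
          rw [Category.assoc, hlam, biprod.lift_snd]
          rw [← cancel_mono i]
          rw [Preadditive.comp_neg, Preadditive.neg_comp, Category.assoc, ht,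
            ← Category.assoc, hιdef, kernel.lift_ι, eq_comm, eq_neg_iff_add_eq_zero,
            add_comm]
          exact hk'
      · -- uniqueness
        rw [← cancel_mono ι]
        have h1 : m ≫ ι = k ≫ biprod.fst := by
          rw [← biprod.lift_fst ι (-t), ← hlam, ← Category.assoc, hm]
        rw [h1, hιdef, kernel.lift_ι]
    -- the resulting short exact sequence identifies `b` with the pushout
    set S : ShortComplex C := ShortComplex.mk lam e hle with hS
    have hex : S.Exact := S.exact_of_f_is_kernel hlim
    haveI : Mono S.f := hmlam
    haveI : Epi S.g := hee
    have hco : IsColimit (CokernelCofork.ofπ S.g S.zero) := hex.gIsCokernel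
    have hpo : IsColimit
        (Abelian.BiproductToPushoutIsCokernel.biproductToPushoutCofork ι t) :=
      Abelian.BiproductToPushoutIsCokernel.isColimitBiproductToPushout ι t
    let e₄ : b ≅ pushout ι t := IsColimit.coconePointUniqueUpToIso hco hpo
    have hcompat : e ≫ e₄.hom =
        Abelian.BiproductToPushoutIsCokernel.biproductToPushout ι t :=
      IsColimit.comp_coconePointUniqueUpToIso_hom hco hpo WalkingParallelPair.one
    have w₁ : f ≫ e₄.hom = pushout.inl ι t := by
      have : biprod.inl ≫ e = f := biprod.inl_desc f i
      rw [← this, Category.assoc, hcompat]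
      simp [Abelian.BiproductToPushoutIsCokernel.biproductToPushout]
    have w₂ : i ≫ e₄.hom = pushout.inr ι t := by
      have : biprod.inr ≫ e = i := biprod.inr_desc f i
      rw [← this, Category.assoc, hcompat]
      simp [Abelian.BiproductToPushoutIsCokernel.biproductToPushout]
    have comm : CommSq ι t f i := ⟨ht.symm⟩
    -- cokernel of `ι` lies in `U`
    have hcokι : cokernel ι ∈ U := by
      have hco2 :=
        Abelian.epiIsCokernelOfKernel
          (KernelFork.ofι (kernel.ι g) (kernel.condition g)) (kernelIsKernel g)
      exact memU_of_iso U hzero hext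
        (IsColimit.coconePointUniqueUpToIso hco2 (colimit.isColimit _)) hcok
    exact ⟨u, v, ι, t, f, hker, hv, inferInstanceAs (Mono (kernel.ι g)), hcokι,
      IsPushout.of_iso_pushout comm e₄ w₁ w₂⟩
  · -- pushout description → left special
    intro h x u₀ p hp hu
    haveI := hp
    set i : kernel p ⟶ x := kernel.ι p with hi
    have hcokmem : cokernel i ∈ U := by
      have hco :=
        Abelian.epiIsCokernelOfKernel
          (KernelFork.ofι (kernel.ι p) (kernel.condition p)) (kernelIsKernel p)
      exact memU_of_iso U hzero hext
        (IsColimit.coconePointUniqueUpToIso hco (colimit.isColimit _)) hu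
    obtain ⟨u, v, ι', t, s, hu', hv, hmono, hcok', hpo⟩ :=
      h (kernel p) x i inferInstance hcokmem
    haveI := hmono
    have hc' : ι' ≫ s ≫ p = 0 := by
      rw [← Category.assoc, hpo.w, Category.assoc, hi, kernel.condition, comp_zero]
    set q₀ : cokernel ι' ⟶ u₀ := cokernel.desc ι' (s ≫ p) hc' with hq₀
    have hq : cokernel.π ι' ≫ q₀ = s ≫ p := cokernel.π_desc ι' (s ≫ p) hc'
    have hmw : ι' ≫ cokernel.π ι' = t ≫ (0 : kernel p ⟶ cokernel ι') := by
      rw [cokernel.condition, comp_zero]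
    set m : x ⟶ cokernel ι' := hpo.desc (cokernel.π ι') 0 hmw with hm
    have hm1 : s ≫ m = cokernel.π ι' := hpo.inl_desc _ _ hmw
    have hm2 : i ≫ m = 0 := hpo.inr_desc _ _ hmw
    have hm2' : kernel.ι p ≫ m = 0 := by rw [← hi]; exact hm2
    set r : u₀ ⟶ cokernel ι' := Abelian.epiDesc p m hm2' with hr'
    have hr : p ≫ r = m := Abelian.comp_epiDesc p m hm2'
    have hmq : m ≫ q₀ = p := by
      apply hpo.hom_ext
      · rw [← Category.assoc, hm1, hq]
      · rw [← Category.assoc, hm2, zero_comp, hi, kernel.condition]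
    haveI hiso : IsIso q₀ := by
      refine ⟨r, ?_, ?_⟩
      · rw [← cancel_epi (cokernel.π ι'), ← Category.assoc, hq, Category.assoc, hr,
          hm1, Category.comp_id]
      · rw [← cancel_epi p, ← Category.assoc, hr, hmq, Category.comp_id]
    have hsp : s ≫ p = cokernel.π ι' ≫ q₀ := hq.symm
    refine ⟨v, s, hv, ?_, ?_⟩
    · rw [hsp]; exact epi_comp _ _
    · rw [hsp]
      have e1 : kernel (cokernel.π ι' ≫ q₀) ≅ kernel (cokernel.π ι') :=
        kernelCompMono _ q₀
      have hlim :=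
        Abelian.monoIsKernelOfCokernel
          (CokernelCofork.ofπ (cokernel.π ι') (cokernel.condition ι')) (cokernelIsCokernel ι')
      have e2 : u ≅ kernel (cokernel.π ι') :=
        IsLimit.conePointUniqueUpToIso hlim (limit.isLimit _)
      exact memU_of_iso U hzero hext (e2 ≪≫ e1.symm) hu'
end

section
/- Let C be a small abelian category and let U be a left special full additive subcategory of C closed under extensions. If X : C^op → Ab is a weakly effaceable presheaf (effaceable by epimorphisms of C), then its restriction to U is weakly effaceable with respect to the admissible epimorphisms of U: for every object u of U and every ξ ∈ X(u) there exist an object v of U and an epimorphism q : v → u in C whose kernel lies in U such that X(q)(ξ) = 0. -/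
open CategoryTheory CategoryTheory.Limits Opposite ZeroObject

universe u

/-- Let `C` be a small abelian category and `U` a left special full
additive subcategory of `C` closed under extensions.  If `X : Cᵒᵖ ⥤ Ab` is a weakly
effaceable presheaf (effaceable by epimorphisms of `C`), then its restriction to `U` is
weakly effaceable with respect to the admissible epimorphisms of `U`: for every `u ∈ U`
and every `ξ ∈ X u` there are `v ∈ U` and an epimorphism `q : v ⟶ u` in `C` whose kernel
lies in `U` such that `X.map q.op ξ = 0`. -/
theorem restriction_of_weakly_effaceable_to_left_special
    (C : Type u) [SmallCategory C] [Abelian C] (U : Set C)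
    (hzero : (0 : C) ∈ U)
    (hbiprod : ∀ a b : C, a ∈ U → b ∈ U → (a ⊞ b) ∈ U)
    (hext : ∀ S : ShortComplex C, S.ShortExact → S.X₁ ∈ U → S.X₃ ∈ U → S.X₂ ∈ U)
    (hspecial : ∀ (x u : C) (p : x ⟶ u), Epi p → u ∈ U →
        ∃ (v : C) (f : v ⟶ x), v ∈ U ∧ Epi (f ≫ p) ∧ kernel (f ≫ p) ∈ U)
    (X : Cᵒᵖ ⥤ AddCommGrpCat.{u})
    (hX : ∀ (c : C) (ξ : X.obj (op c)),
      ∃ (c' : C) (p : c' ⟶ c), Epi p ∧ X.map p.op ξ = 0)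
    (u : C) (hu : u ∈ U) (ξ : X.obj (op u)) :
    ∃ (v : C) (q : v ⟶ u), v ∈ U ∧ Epi q ∧ kernel q ∈ U ∧ X.map q.op ξ = 0 := by
  obtain ⟨c', p, hp, hξ⟩ := hX u ξ
  obtain ⟨v, f, hv, hepi, hker⟩ := hspecial c' u p hp hu
  refine ⟨v, f ≫ p, hv, hepi, hker, ?_⟩
  rw [op_comp, X.map_comp]
  simp only [AddCommGrpCat.comp_apply]
  rw [hξ, map_zero]
end
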